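/- arXiv:2002.06269 — 2 statements merged into one kernel-verified Lean document; each statement's English description precedes it below -/
import Mathlib

section
/- Under the hypotheses of the previous theorem (well-posed linear PDE with Lipschitz constant C, loss functional L̂(û) = c₁ L̂_I(û) + c₂ L̂_B(û) with c₁, c₂ > 0 and p ≥ 1), the L¹ error of an approximate solution û satisfies the bound ‖û - u‖_{L¹} ≤ C · (c₁^{-1/p}|Ω|^{1-1/p} + c₂^{-1/p}|∂Ω|^{1-1/p}) · L̂(û)^{1/p}. -/
open MeasureTheory
open scoped ENNReal

lemma holder_aux {α : Type*} [MeasurableSpace α] (μ : Measure α) [IsFiniteMeasure μ]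
    (f : α → ℝ) (p : ℝ) (hp : 1 ≤ p)
    (hfp : Integrable (fun x => |f x| ^ p) μ) :
    ∫ x, |f x| ∂μ ≤ (μ Set.univ).toReal ^ (1 - 1 / p) * (∫ x, |f x| ^ p ∂μ) ^ (1 / p) := by
  have hp0 : (0:ℝ) < p := lt_of_lt_of_le one_pos hp
  -- |f| is AEStronglyMeasurable
  have habs : ∀ x, |f x| = (|f x| ^ p) ^ (1/p) := by
    intro x
    rw [← Real.rpow_mul (abs_nonneg _), mul_one_div, div_self hp0.ne', Real.rpow_one]
  have hmf : AEStronglyMeasurable (fun x => |f x|) μ := by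
    have := ((Real.continuous_rpow_const (by positivity : (0:ℝ) ≤ 1/p)).comp_aestronglyMeasurable hfp.1)
    refine this.congr (Filter.Eventually.of_forall fun x => ?_)
    exact (habs x).symm
  by_cases hp1 : p = 1
  · subst hp1; simp
  have hp1' : 1 < p := lt_of_le_of_ne hp (Ne.symm hp1)
  set q := Real.conjExponent p with hq
  have hpq : Real.HolderConjugate p q := Real.HolderConjugate.conjExponent hp1'
  -- lintegral Hölder with constant 1
  set g : α → ℝ≥0∞ := fun x => ENNReal.ofReal (|f x|) with hg
  have hgm : AEMeasurable g μ := (ENNReal.measurable_ofReal.comp_aemeasurable hmf.aemeasurable)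
  have hH := ENNReal.lintegral_mul_le_Lp_mul_Lq μ hpq hgm aemeasurable_const (g := fun _ => (1:ℝ≥0∞))
  simp only [Pi.mul_apply, mul_one, ENNReal.one_rpow, lintegral_const, one_mul] at hH
  -- identify lintegral of g^p
  have hgp : ∀ x, g x ^ p = ENNReal.ofReal (|f x| ^ p) := by
    intro x
    rw [← ENNReal.ofReal_rpow_of_nonneg (abs_nonneg _) hp0.le]
  have hIp : ∫⁻ x, g x ^ p ∂μ = ENNReal.ofReal (∫ x, |f x| ^ p ∂μ) := by
    simp_rw [hgp]
    rw [← ofReal_integral_eq_lintegral_ofReal hfp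
      (Filter.Eventually.of_forall fun x => by positivity)]
  have hI1 : ∫ x, |f x| ∂μ = (∫⁻ x, g x ∂μ).toReal := by
    rw [integral_eq_lintegral_of_nonneg_ae (Filter.Eventually.of_forall fun x => abs_nonneg _) hmf]
  rw [hI1]
  have hfin : (ENNReal.ofReal (∫ x, |f x| ^ p ∂μ)) ^ (1/p) * (μ Set.univ) ^ (1/q) ≠ ⊤ := by
    apply ENNReal.mul_ne_top
    · exact ENNReal.rpow_ne_top_of_nonneg (by positivity) ENNReal.ofReal_ne_top
    · exact ENNReal.rpow_ne_top_of_nonneg (one_div_nonneg.mpr hpq.symm.pos.le) (measure_ne_top μ _)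
  calc (∫⁻ x, g x ∂μ).toReal
      ≤ ((ENNReal.ofReal (∫ x, |f x| ^ p ∂μ)) ^ (1/p) * (μ Set.univ) ^ (1/q)).toReal := by
        apply ENNReal.toReal_mono hfin
        rw [← hIp]; exact hH
    _ = (μ Set.univ).toReal ^ (1 - 1/p) * (∫ x, |f x| ^ p ∂μ) ^ (1/p) := by
        rw [ENNReal.toReal_mul, ← ENNReal.toReal_rpow, ← ENNReal.toReal_rpow,
          ENNReal.toReal_ofReal (integral_nonneg fun x => by positivity)]
        rw [mul_comm]
        have hq1 : 1/q = 1 - 1/p := by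
          have := hpq.inv_add_inv_eq_one
          rw [inv_eq_one_div, inv_eq_one_div] at this
          linarith
        rw [hq1]

/-- Error bound: ‖û - u‖₁ ≤ C (c₁^{-1/p}|Ω|^{1-1/p} + c₂^{-1/p}|∂Ω|^{1-1/p}) L̂(û)^{1/p}. -/
theorem stmt_5 {Ω Γ : Type*} [MeasurableSpace Ω] [MeasurableSpace Γ]
    (μ : Measure Ω) (ν : Measure Γ) [IsFiniteMeasure μ] [IsFiniteMeasure ν]
    (u uhat : Ω → ℝ) (Fhat : Ω → ℝ) (Ghat : Γ → ℝ)
    (C : ℝ) (hC : 0 < C)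
    (hstab : ∫ x, |uhat x - u x| ∂μ ≤
      C * ((∫ x, |Fhat x| ∂μ) + ∫ y, |Ghat y| ∂ν))
    (p : ℝ) (hp : 1 ≤ p) (c₁ c₂ : ℝ) (hc₁ : 0 < c₁) (hc₂ : 0 < c₂)
    (hFp : Integrable (fun x => |Fhat x| ^ p) μ)
    (hGp : Integrable (fun y => |Ghat y| ^ p) ν) :
    ∫ x, |uhat x - u x| ∂μ ≤
      C * (c₁ ^ (-(1 / p)) * (μ Set.univ).toReal ^ (1 - 1 / p) +
           c₂ ^ (-(1 / p)) * (ν Set.univ).toReal ^ (1 - 1 / p)) *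
        (c₁ * (∫ x, |Fhat x| ^ p ∂μ) + c₂ * (∫ y, |Ghat y| ^ p ∂ν)) ^ (1 / p) := by
  have hp0 : (0:ℝ) < p := lt_of_lt_of_le one_pos hp
  set A := ∫ x, |Fhat x| ^ p ∂μ with hA
  set B := ∫ y, |Ghat y| ^ p ∂ν with hB
  have hA0 : 0 ≤ A := integral_nonneg fun x => by positivity
  have hB0 : 0 ≤ B := integral_nonneg fun y => by positivity
  set L := c₁ * A + c₂ * B with hL
  have hL0 : 0 ≤ L := by positivity
  have keyF : A ^ (1/p) ≤ c₁ ^ (-(1/p)) * L ^ (1/p) := by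
    have hle : c₁ * A ≤ L := by simp only [hL]; nlinarith
    calc A ^ (1/p) = c₁ ^ (-(1/p)) * (c₁ * A) ^ (1/p) := by
          rw [Real.mul_rpow hc₁.le hA0, ← mul_assoc, ← Real.rpow_add hc₁]
          norm_num
      _ ≤ c₁ ^ (-(1/p)) * L ^ (1/p) := by
          apply mul_le_mul_of_nonneg_left _ (Real.rpow_nonneg hc₁.le _)
          exact Real.rpow_le_rpow (by positivity) hle (by positivity)
  have keyG : B ^ (1/p) ≤ c₂ ^ (-(1/p)) * L ^ (1/p) := by
    have hle : c₂ * B ≤ L := by simp only [hL]; nlinarith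
    calc B ^ (1/p) = c₂ ^ (-(1/p)) * (c₂ * B) ^ (1/p) := by
          rw [Real.mul_rpow hc₂.le hB0, ← mul_assoc, ← Real.rpow_add hc₂]
          norm_num
      _ ≤ c₂ ^ (-(1/p)) * L ^ (1/p) := by
          apply mul_le_mul_of_nonneg_left _ (Real.rpow_nonneg hc₂.le _)
          exact Real.rpow_le_rpow (by positivity) hle (by positivity)
  have hF1 : ∫ x, |Fhat x| ∂μ ≤
      (μ Set.univ).toReal ^ (1 - 1/p) * (c₁ ^ (-(1/p)) * L ^ (1/p)) := by
    refine (holder_aux μ Fhat p hp hFp).trans ?_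
    have hm : 0 ≤ (μ Set.univ).toReal ^ (1 - 1/p) := Real.rpow_nonneg ENNReal.toReal_nonneg _
    exact mul_le_mul_of_nonneg_left keyF hm
  have hG1 : ∫ y, |Ghat y| ∂ν ≤
      (ν Set.univ).toReal ^ (1 - 1/p) * (c₂ ^ (-(1/p)) * L ^ (1/p)) := by
    refine (holder_aux ν Ghat p hp hGp).trans ?_
    have hm : 0 ≤ (ν Set.univ).toReal ^ (1 - 1/p) := Real.rpow_nonneg ENNReal.toReal_nonneg _
    exact mul_le_mul_of_nonneg_left keyG hm
  calc ∫ x, |uhat x - u x| ∂μ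
      ≤ C * ((∫ x, |Fhat x| ∂μ) + ∫ y, |Ghat y| ∂ν) := hstab
    _ ≤ C * ((μ Set.univ).toReal ^ (1 - 1/p) * (c₁ ^ (-(1/p)) * L ^ (1/p)) +
        (ν Set.univ).toReal ^ (1 - 1/p) * (c₂ ^ (-(1/p)) * L ^ (1/p))) := by
        apply mul_le_mul_of_nonneg_left _ hC.le
        exact add_le_add hF1 hG1
    _ = C * (c₁ ^ (-(1 / p)) * (μ Set.univ).toReal ^ (1 - 1 / p) +
           c₂ ^ (-(1 / p)) * (ν Set.univ).toReal ^ (1 - 1 / p)) * L ^ (1 / p) := by ring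
end

section
/- Consider λ(c₁, c₂) := M_B(u; c₂)/(M_I(u; c₁) + M_B(u; c₂)) where scaling the interior operator by c₁ ≠ 0 gives M_I(u; c₁) = |c₁|^p M_I(u) and scaling the boundary operator by c₂ ≠ 0 gives M_B(u; c₂) = |c₂|^p M_B(u), and similarly L̂_I(û; c₁) = |c₁|^p L̂_I(û), L̂_B(û; c₂) = |c₂|^p L̂_B(û). Then the ratio [λ(c₁,c₂)·L̂_I(û; c₁)] / [(1 - λ(c₁,c₂))·L̂_B(û; c₂)] equals L̂_I(û)/L̂_B(û) · (M_B(u)/M_I(u)) for all c₁, c₂ ≠ 0; i.e., the weighted loss ratio is invariant under rescaling of the PDE operators. -/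
/-- Scale invariance of the optimally weighted loss ratio: rescaling the
interior operator by c₁ and the boundary operator by c₂ leaves the ratio
λ L̂_I / ((1-λ) L̂_B) unchanged. -/
theorem stmt_13 (MI MB LI LB p : ℝ)
    (hMI : 0 < MI) (hMB : 0 < MB) (hLI : 0 < LI) (hLB : 0 < LB)
    (hp : 1 ≤ p) (c₁ c₂ : ℝ) (hc₁ : c₁ ≠ 0) (hc₂ : c₂ ≠ 0)
    (MIc MBc LIc LBc lam : ℝ)
    (hMIc : MIc = |c₁| ^ p * MI) (hMBc : MBc = |c₂| ^ p * MB)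
    (hLIc : LIc = |c₁| ^ p * LI) (hLBc : LBc = |c₂| ^ p * LB)
    (hlam : lam = MBc / (MIc + MBc)) :
    lam * LIc / ((1 - lam) * LBc) = LI / LB * (MB / MI) := by
  have h1 : (0:ℝ) < |c₁| ^ p := Real.rpow_pos_of_pos (abs_pos.2 hc₁) p
  have h2 : (0:ℝ) < |c₂| ^ p := Real.rpow_pos_of_pos (abs_pos.2 hc₂) p
  have hMIc' : 0 < MIc := hMIc ▸ mul_pos h1 hMI
  have hMBc' : 0 < MBc := hMBc ▸ mul_pos h2 hMB
  have hsum : 0 < MIc + MBc := by linarith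
  have h1m : 1 - lam = MIc / (MIc + MBc) := by
    rw [hlam]; field_simp; ring
  rw [h1m, hlam, hLIc, hLBc, hMIc, hMBc]
  field_simp
end
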